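/- Let z₀, z₁, z₂, z₂' be a δ-fork in the Heisenberg group ℍ_∞ (i.e. both triples {z₀,z₁,z₂} and {z₀,z₁,z₂'} are (1+δ)-biLipschitz equivalent to the path {0,1,2} ⊂ ℤ), with δ ∈ (0, 10⁻¹⁰⁰). If NH(z₂⁻¹ z₂') < (1/2)·d(z₂, z₂'), then d(z₂, z₂') ≤ 2000·δ^{1/2}·d(z₀, z₁). -/

import Mathlib

/-!
For a `(1+δ)`-biLipschitz triple `z₀, z₁, z₂`, write `P = z₀⁻¹z₁` and `Q = z₁⁻¹z₂`, so that
`z₀⁻¹z₂ = PQ`. The Koranyi norm satisfies a quantitative strict triangle inequality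
`N(PQ)⁴ ≤ 16X² - 3X‖q - p‖²` when `N(P)², N(Q)² ≤ X`, where `p, q` are the horizontal parts.
Since `N(PQ) ≥ 2s` while `N(P), N(Q) ≤ (1+δ)s`, the second difference `x₂ - 2x₁ + x₀` of the
horizontal coordinates is `O(δ^{1/2} s)`. Both tips of the fork therefore have horizontal
coordinates within `O(δ^{1/2} d(z₀, z₁))` of each other, and the hypothesis on `NH` says that the
vertical part of `z₂⁻¹z₂'` cannot carry its Koranyi norm.
-/

variable {H : Type*} [NormedAddCommGroup H] [InnerProductSpace ℂ H]

/-- The canonical symplectic form `ω(x,y) = Im ⟪x, y⟫` on a complex Hilbert space. -/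
noncomputable def symp (x y : H) : ℝ := (inner ℂ x y : ℂ).im

/-- Group product of the Heisenberg group `H × ℝ`. -/
noncomputable def Hmul (a b : H × ℝ) : H × ℝ :=
  (a.1 + b.1, a.2 + b.2 + symp a.1 b.1 / 2)

/-- Group inverse. -/
noncomputable def Hinv (a : H × ℝ) : H × ℝ := (-a.1, -a.2)

/-- The Koranyi norm. -/
noncomputable def KN (a : H × ℝ) : ℝ := (‖a.1‖ ^ 4 + a.2 ^ 2) ^ ((1 : ℝ) / 4)

/-- The Koranyi metric. -/
noncomputable def Kd (g h : H × ℝ) : ℝ := KN (Hmul (Hinv g) h)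

/-- Non-horizontality `NH(x,t) = |t|^(1/2)`. -/
noncomputable def NH (a : H × ℝ) : ℝ := |a.2| ^ ((1 : ℝ) / 2)

/-- `(a, b, c)` is `(1+δ)`-biLipschitz equivalent to the path `{0,1,2} ⊂ ℤ`. -/
noncomputable def BiLipP3 (δ : ℝ) (a b c : H × ℝ) : Prop :=
  ∃ s : ℝ, 0 < s ∧
    s ≤ Kd a b ∧ Kd a b ≤ (1 + δ) * s ∧
    s ≤ Kd b c ∧ Kd b c ≤ (1 + δ) * s ∧
    2 * s ≤ Kd a c ∧ Kd a c ≤ (1 + δ) * (2 * s)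

lemma symp_self (x : H) : symp x x = 0 := inner_self_im (𝕜 := ℂ) x

lemma symp_sub_self_right (x y : H) : symp x (y - x) = symp x y := by
  have hx : (inner ℂ x x).im = 0 := symp_self x
  simp only [symp, inner_sub_right, Complex.sub_im, hx, sub_zero]

lemma abs_symp_le (x y : H) : |symp x y| ≤ ‖x‖ * ‖y‖ :=
  (Complex.abs_im_le_norm _).trans (norm_inner_le_norm x y)

lemma Hmul_Hinv_fst (a b : H × ℝ) : (Hmul (Hinv a) b).1 = b.1 - a.1 := by
  simp [Hmul, Hinv, neg_add_eq_sub]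

lemma Hmul_Hinv_mul_Hmul_Hinv (z₀ z₁ z₂ : H × ℝ) :
    Hmul (Hmul (Hinv z₀) z₁) (Hmul (Hinv z₁) z₂) = Hmul (Hinv z₀) z₂ := by
  ext
  · simp [Hmul, Hinv]
  · have h₁ : (inner ℂ z₁.1 z₁.1).im = 0 := symp_self z₁.1
    simp only [Hmul, Hinv, symp, inner_add_left, inner_add_right, inner_neg_left,
      inner_neg_right, Complex.add_im, Complex.neg_im, h₁]
    ring

lemma NH_sq {E : Type*} (a : E × ℝ) : NH a ^ 2 = |a.2| := by
  rw [NH, ← Real.rpow_natCast, ← Real.rpow_mul (abs_nonneg _)]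
  norm_num

section KoranyiNorm

variable {E : Type*} [NormedAddCommGroup E] {a : E × ℝ} {X : ℝ}

lemma KN_nonneg (a : E × ℝ) : 0 ≤ KN a := Real.rpow_nonneg (by positivity) _

lemma KN_pow_four (a : E × ℝ) : KN a ^ 4 = ‖a.1‖ ^ 4 + a.2 ^ 2 := by
  rw [KN, ← Real.rpow_natCast, ← Real.rpow_mul (by positivity)]
  norm_num

lemma norm_fst_sq_le_of_KN_sq_le (h : KN a ^ 2 ≤ X) : ‖a.1‖ ^ 2 ≤ X := by
  refine le_trans ?_ h
  refine le_of_pow_le_pow_left₀ two_ne_zero (by positivity) ?_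
  nlinarith [KN_pow_four a]

lemma snd_sq_le_of_KN_sq_le (h : KN a ^ 2 ≤ X) : a.2 ^ 2 ≤ 2 * X * (X - ‖a.1‖ ^ 2) := by
  have hX : KN a ^ 4 ≤ X ^ 2 := by
    nlinarith [pow_le_pow_left₀ (by positivity) h 2]
  have hx := norm_fst_sq_le_of_KN_sq_le h
  nlinarith [KN_pow_four a, sq_nonneg ‖a.1‖]

lemma KN_le_two_mul_norm_fst_of_NH_lt (h : NH a < 1 / 2 * KN a) : KN a ≤ 2 * ‖a.1‖ := by
  have hNH : |a.2| < KN a ^ 2 / 4 := by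
    have h0 : 0 ≤ NH a := Real.rpow_nonneg (abs_nonneg _) _
    rw [← NH_sq]
    nlinarith [pow_lt_pow_left₀ h h0 two_ne_zero]
  have hvert : a.2 ^ 2 ≤ KN a ^ 4 / 16 := by
    rw [← sq_abs]; nlinarith [abs_nonneg a.2]
  refine le_of_pow_le_pow_left₀ four_ne_zero (by positivity) ?_
  nlinarith [KN_pow_four a, pow_nonneg (norm_nonneg a.1) 4]

end KoranyiNorm

lemma KN_Hmul_pow_four_le {P Q : H × ℝ} {X : ℝ} (hP : KN P ^ 2 ≤ X) (hQ : KN Q ^ 2 ≤ X) :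
    KN (Hmul P Q) ^ 4 ≤ 16 * X ^ 2 - 3 * X * ‖Q.1 - P.1‖ ^ 2 := by
  set p := P.1
  set q := Q.1
  set D := ‖q - p‖ ^ 2
  set E := (X - ‖p‖ ^ 2) + (X - ‖q‖ ^ 2)
  set S := ‖p + q‖ ^ 2
  set w := symp p q
  have hp := norm_fst_sq_le_of_KN_sq_le hP
  have hq := norm_fst_sq_le_of_KN_sq_le hQ
  have hX : 0 ≤ X := (sq_nonneg _).trans hP
  have hS : S = 4 * X - (2 * E + D) := by
    have := parallelogram_law_with_norm ℂ p q
    rw [← norm_neg (p - q), neg_sub] at this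
    simp only [S, D, E]
    nlinarith
  -- `S = 4X - u` with `0 ≤ u` and `0 ≤ S`, hence `S² ≤ 16X² - 4Xu`
  have hS_sq : S ^ 2 ≤ 16 * X ^ 2 - 4 * X * (2 * E + D) := by
    have hu : 0 ≤ 2 * E + D := by positivity
    nlinarith [mul_nonneg hu (by positivity : 0 ≤ S)]
  -- `ω(p, q) = ω(p, q - p)`, which is small when `q` is close to `p`
  have hw : w ^ 2 ≤ X * D := by
    have h := abs_symp_le p (q - p)
    rw [symp_sub_self_right] at h
    calc w ^ 2 = |w| ^ 2 := (sq_abs w).symm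
      _ ≤ (‖p‖ * ‖q - p‖) ^ 2 := pow_le_pow_left₀ (abs_nonneg _) h 2
      _ = ‖p‖ ^ 2 * D := mul_pow _ _ _
      _ ≤ X * D := mul_le_mul_of_nonneg_right hp (by positivity)
  have hvert : (P.2 + Q.2 + w / 2) ^ 2 ≤ 6 * X * E + 3 / 4 * (X * D) := by
    have hτ := snd_sq_le_of_KN_sq_le hP
    have hσ := snd_sq_le_of_KN_sq_le hQ
    nlinarith [sq_nonneg (P.2 - Q.2), sq_nonneg (P.2 - w / 2), sq_nonneg (Q.2 - w / 2)]
  have hE : 0 ≤ X * E := mul_nonneg hX (by linarith)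
  calc KN (Hmul P Q) ^ 4 = S ^ 2 + (P.2 + Q.2 + w / 2) ^ 2 := by
        rw [KN_pow_four]; simp only [Hmul, S, w, p, q]; ring
    _ ≤ 16 * X ^ 2 - 3 * X * D := by nlinarith

lemma one_add_pow_four_le {δ : ℝ} (hδ0 : 0 ≤ δ) (hδ1 : δ ≤ 1) : (1 + δ) ^ 4 ≤ 1 + 15 * δ := by
  have : δ ^ 2 ≤ δ := by nlinarith
  have : δ ^ 3 ≤ δ := by nlinarith
  have : δ ^ 4 ≤ δ := by nlinarith
  nlinarith

lemma BiLipP3.norm_sub_sub_le {δ : ℝ} (hδ0 : 0 ≤ δ) (hδ1 : δ ≤ 1) {a b c : H × ℝ}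
    (h : BiLipP3 δ a b c) : ‖(c.1 - b.1) - (b.1 - a.1)‖ ≤ 9 * √δ * Kd a b := by
  obtain ⟨s, hs, hab, hab', -, hbc', hac, -⟩ := h
  set P := Hmul (Hinv a) b
  set Q := Hmul (Hinv b) c
  set X := ((1 + δ) * s) ^ 2
  have hPQ : KN (Hmul P Q) = Kd a c := congrArg KN (Hmul_Hinv_mul_Hmul_Hinv a b c)
  have hD : ‖(c.1 - b.1) - (b.1 - a.1)‖ = ‖Q.1 - P.1‖ := by
    rw [Hmul_Hinv_fst, Hmul_Hinv_fst]
  have hP : KN P ^ 2 ≤ X := pow_le_pow_left₀ (KN_nonneg _) hab' 2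
  have hQ : KN Q ^ 2 ≤ X := pow_le_pow_left₀ (KN_nonneg _) hbc' 2
  have hlow : (2 * s) ^ 4 ≤ KN (Hmul P Q) ^ 4 := pow_le_pow_left₀ (by positivity) (hPQ ▸ hac) 4
  have hup := KN_Hmul_pow_four_le hP hQ
  have hX : s ^ 2 ≤ X := pow_le_pow_left₀ hs.le (le_mul_of_one_le_left hs.le (by linarith)) 2
  have hXsq : X ^ 2 ≤ (1 + 15 * δ) * s ^ 4 := by
    have := one_add_pow_four_le hδ0 hδ1
    calc X ^ 2 = (1 + δ) ^ 4 * s ^ 4 := by ring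
      _ ≤ _ := mul_le_mul_of_nonneg_right this (by positivity)
  -- `3 s² ‖q - p‖² ≤ 3 X ‖q - p‖² ≤ 16 (X² - s⁴) ≤ 240 δ s⁴`
  have hsq : ‖Q.1 - P.1‖ ^ 2 ≤ 80 * δ * s ^ 2 := by
    have hs2 : 0 < s ^ 2 := by positivity
    nlinarith [mul_le_mul_of_nonneg_right hX (sq_nonneg ‖Q.1 - P.1‖)]
  rw [hD]
  refine le_of_pow_le_pow_left₀ two_ne_zero (mul_nonneg (by positivity) (KN_nonneg _)) ?_
  calc ‖Q.1 - P.1‖ ^ 2 ≤ 80 * δ * s ^ 2 := hsq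
    _ ≤ 81 * δ * Kd a b ^ 2 := by gcongr; linarith
    _ = (9 * √δ * Kd a b) ^ 2 := by rw [mul_pow, mul_pow, Real.sq_sqrt hδ0]; ring

/-- collapse of the tips of a δ-fork with non-degenerate vertical part. -/
theorem stmt_13 (δ : ℝ) (hδ : δ ∈ Set.Ioo (0:ℝ) (10 ^ (-(100:ℤ)) : ℝ))
    (z₀ z₁ z₂ z₂' : H × ℝ)
    (h1 : BiLipP3 δ z₀ z₁ z₂) (h2 : BiLipP3 δ z₀ z₁ z₂')
    (hNH : NH (Hmul (Hinv z₂) z₂') < (1 / 2) * Kd z₂ z₂') :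
    Kd z₂ z₂' ≤ 2000 * δ ^ ((1:ℝ)/2) * Kd z₀ z₁ := by
  have hδ0 : 0 ≤ δ := hδ.1.le
  have hδ1 : δ ≤ 1 := hδ.2.le.trans (by norm_num)
  have hfork := norm_sub_le ((z₂'.1 - z₁.1) - (z₁.1 - z₀.1)) ((z₂.1 - z₁.1) - (z₁.1 - z₀.1))
  rw [sub_sub_sub_cancel_right, sub_sub_sub_cancel_right] at hfork
  have hK : 0 ≤ √δ * Kd z₀ z₁ := mul_nonneg (Real.sqrt_nonneg δ) (KN_nonneg _)
  calc Kd z₂ z₂' ≤ 2 * ‖(Hmul (Hinv z₂) z₂').1‖ := KN_le_two_mul_norm_fst_of_NH_lt hNH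
    _ = 2 * ‖z₂'.1 - z₂.1‖ := by rw [Hmul_Hinv_fst]
    _ ≤ 2 * (9 * √δ * Kd z₀ z₁ + 9 * √δ * Kd z₀ z₁) := by
        gcongr
        exact hfork.trans (add_le_add (h2.norm_sub_sub_le hδ0 hδ1) (h1.norm_sub_sub_le hδ0 hδ1))
    _ ≤ 2000 * δ ^ ((1:ℝ)/2) * Kd z₀ z₁ := by rw [← Real.sqrt_eq_rpow]; linarith
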